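/- arXiv:1803.01149 — 9 statements merged into one kernel-verified Lean document; each statement's English description precedes it below -/
import Mathlib

section
/- For a finite group G and a subgroup H of G, csd(H,G) ≥ |N(G) ∩ L₁(G)| / |L₁(G)|, where N(G) is the set of normal subgroups of G. -/
open scoped Pointwise

/-- Two subgroups permute if their setwise products coincide. -/
def Subgroup.Permutes {G : Type*} [Group G] (A B : Subgroup G) : Prop :=
  (A : Set G) * (B : Set G) = (B : Set G) * (A : Set G)

/-- The relative cyclic subgroup commutativity degree `csd(H,G)`:
the proportion of pairs `(H₁,G₁)` with `H₁` a cyclic subgroup of `H`,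
`G₁` a cyclic subgroup of `G`, such that `H₁G₁ = G₁H₁`. -/
noncomputable def csd {G : Type*} [Group G] (H : Subgroup G) : ℝ :=
  (Nat.card {p : Subgroup G × Subgroup G //
      p.1 ≤ H ∧ IsCyclic p.1 ∧ IsCyclic p.2 ∧ p.1.Permutes p.2} : ℝ) /
  ((Nat.card {K : Subgroup G // K ≤ H ∧ IsCyclic K} : ℝ) *
   (Nat.card {K : Subgroup G // IsCyclic K} : ℝ))

theorem Subgroup.permutes_of_normal_right {G : Type*} [Group G] (K : Subgroup G)
    {N : Subgroup G} [N.Normal] : K.Permutes N := by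
  rw [Subgroup.Permutes, ← Subgroup.mul_normal, ← Subgroup.normal_mul, sup_comm]

theorem card_cyclic_of_le_mul_card_normal_cyclic_le_card_permuting {G : Type*} [Group G]
    [Finite G] (H : Subgroup G) :
    Nat.card {K : Subgroup G // K ≤ H ∧ IsCyclic K} *
        Nat.card {K : Subgroup G // K.Normal ∧ IsCyclic K} ≤
      Nat.card {p : Subgroup G × Subgroup G //
        p.1 ≤ H ∧ IsCyclic p.1 ∧ IsCyclic p.2 ∧ p.1.Permutes p.2} := by
  rw [← Nat.card_prod]
  refine Nat.card_le_card_of_injective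
    (fun x ↦ ⟨(x.1.1, x.2.1), x.1.2.1, x.1.2.2, x.2.2.2,
      have := x.2.2.1; x.1.1.permutes_of_normal_right⟩) ?_
  rintro ⟨⟨K, _⟩, ⟨N, _⟩⟩ ⟨⟨K', _⟩, ⟨N', _⟩⟩ h
  simp_all

/-- . -/
theorem csd_ge_normal_cyclic_ratio {G : Type*} [Group G] [Finite G] (H : Subgroup G) :
    csd H ≥ (Nat.card {K : Subgroup G // K.Normal ∧ IsCyclic K} : ℝ) /
      (Nat.card {K : Subgroup G // IsCyclic K} : ℝ) := by
  have hcard : (Nat.card {K : Subgroup G // K ≤ H ∧ IsCyclic K} : ℝ) *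
      Nat.card {K : Subgroup G // K.Normal ∧ IsCyclic K} ≤
      Nat.card {p : Subgroup G × Subgroup G //
        p.1 ≤ H ∧ IsCyclic p.1 ∧ IsCyclic p.2 ∧ p.1.Permutes p.2} := by
    exact_mod_cast card_cyclic_of_le_mul_card_normal_cyclic_le_card_permuting H
  have hpos : (0 : ℝ) < Nat.card {K : Subgroup G // K ≤ H ∧ IsCyclic K} :=
    Nat.cast_pos.2 (Nat.card_pos_iff.2 ⟨⟨⟨⊥, bot_le, inferInstance⟩⟩, inferInstance⟩)
  rw [csd, ← div_div, ge_iff_le]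
  gcongr
  rwa [le_div_iff₀' hpos]
end

section
/- Let G = G₁ × G₂ be a direct product of finite groups G₁, G₂ of coprime orders, and let H = H₁ × H₂ with Hᵢ ≤ Gᵢ. Then csd(H, G) = csd(H₁, G₁) · csd(H₂, G₂). -/
/-!
When `|G₁|` and `|G₂|` are coprime, every subgroup of `G₁ × G₂` is the product of its two
projections, since a power of `(a, b)` is `(a, 1)`. So `(A, B) ↦ A × B` is a bijection from
pairs of subgroups of `G₁` and `G₂` onto the subgroups of `G₁ × G₂`. It preserves cyclicity
(a product of cyclic groups of coprime orders is cyclic), inclusion in `H₁ × H₂`, and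
permutability, because `(A × C)(B × D) = AB × CD`. Hence each of the three counts
in `csd` is multiplicative.
-/

open scoped Pointwise

theorem Nat.card_subtype_eq_mul_of_equiv {α β γ : Type*} (e : β × γ ≃ α) {p : α → Prop}
    {q : β → Prop} {r : γ → Prop} (h : ∀ b c, p (e (b, c)) ↔ q b ∧ r c) :
    Nat.card {a // p a} = Nat.card {b // q b} * Nat.card {c // r c} := by
  rw [← Nat.card_prod]
  refine Nat.card_congr ((e.symm.subtypeEquiv fun a => ?_).trans Equiv.subtypeProdEquivProd)
  rw [← h, Prod.mk.eta, e.apply_symm_apply]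

theorem exists_pow_eq_self_and_pow_eq_one {G₁ G₂ : Type*} [Group G₁] [Group G₂]
    {a : G₁} {b : G₂} (h : (orderOf a).Coprime (orderOf b)) :
    ∃ k : ℕ, a ^ k = a ∧ b ^ k = 1 := by
  obtain ⟨k, hka, hkb⟩ := Nat.chineseRemainder h 1 0
  exact ⟨k, by simpa using pow_eq_pow_iff_modEq.mpr hka,
    orderOf_dvd_iff_pow_eq_one.mp (Nat.modEq_zero_iff_dvd.mp hkb)⟩

namespace Subgroup

variable {G₁ G₂ : Type*} [Group G₁] [Group G₂]

theorem map_fst_prod (A : Subgroup G₁) (B : Subgroup G₂) :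
    (A.prod B).map (MonoidHom.fst G₁ G₂) = A :=
  le_antisymm (map_le_iff_le_comap.mpr fun _ hx => hx.1)
    fun a ha => ⟨(a, 1), ⟨ha, B.one_mem⟩, rfl⟩

theorem map_snd_prod (A : Subgroup G₁) (B : Subgroup G₂) :
    (A.prod B).map (MonoidHom.snd G₁ G₂) = B :=
  le_antisymm (map_le_iff_le_comap.mpr fun _ hx => hx.2)
    fun b hb => ⟨(1, b), ⟨A.one_mem, hb⟩, rfl⟩

theorem prod_le_prod_iff {A H₁ : Subgroup G₁} {B H₂ : Subgroup G₂} :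
    A.prod B ≤ H₁.prod H₂ ↔ A ≤ H₁ ∧ B ≤ H₂ := by
  rw [le_prod_iff, map_fst_prod, map_snd_prod]

theorem prod_permutes_prod_iff {A B : Subgroup G₁} {C D : Subgroup G₂} :
    (A.prod C).Permutes (B.prod D) ↔ A.Permutes B ∧ C.Permutes D := by
  have hAB : ((A : Set G₁) * B).Nonempty := ⟨1, 1, A.one_mem, 1, B.one_mem, mul_one 1⟩
  have hCD : ((C : Set G₂) * D).Nonempty := ⟨1, 1, C.one_mem, 1, D.one_mem, mul_one 1⟩
  rw [Permutes, coe_prod, coe_prod, Set.prod_mul_prod_comm, Set.prod_mul_prod_comm,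
    Set.prod_eq_prod_iff_of_nonempty (hAB.prod hCD), Permutes, Permutes]

theorem isCyclic_prod_iff_of_coprime (h : (Nat.card G₁).Coprime (Nat.card G₂))
    {A : Subgroup G₁} {B : Subgroup G₂} :
    IsCyclic (A.prod B) ↔ IsCyclic A ∧ IsCyclic B := by
  have hAB : (Nat.card A).Coprime (Nat.card B) :=
    (h.coprime_dvd_left A.card_subgroup_dvd_card).coprime_dvd_right B.card_subgroup_dvd_card
  rw [(A.prodEquiv B).isCyclic, Group.isCyclic_prod_iff, and_iff_left hAB]

theorem eq_prod_map_fst_map_snd_of_coprime (h : (Nat.card G₁).Coprime (Nat.card G₂))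
    (K : Subgroup (G₁ × G₂)) :
    (K.map (MonoidHom.fst G₁ G₂)).prod (K.map (MonoidHom.snd G₁ G₂)) = K := by
  have hord (a : G₁) (b : G₂) : (orderOf a).Coprime (orderOf b) :=
    (h.coprime_dvd_left (_root_.orderOf_dvd_natCard a)).coprime_dvd_right
      (_root_.orderOf_dvd_natCard b)
  refine le_antisymm ?_ (le_prod_iff.mpr ⟨le_rfl, le_rfl⟩)
  rintro ⟨a₀, b₀⟩
    ⟨⟨⟨a, b'⟩, hab', ha : a = a₀⟩, ⟨⟨a', b⟩, hab'', hb : b = b₀⟩⟩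
  subst ha hb
  obtain ⟨k, hak, hb'k⟩ := exists_pow_eq_self_and_pow_eq_one (hord a b')
  obtain ⟨m, hbm, ha'm⟩ := exists_pow_eq_self_and_pow_eq_one (hord a' b).symm
  have ha : ((a, 1) : G₁ × G₂) ∈ K := by simpa [hak, hb'k] using K.pow_mem hab' k
  have hb : ((1, b) : G₁ × G₂) ∈ K := by simpa [hbm, ha'm] using K.pow_mem hab'' m
  simpa using K.mul_mem ha hb

noncomputable def prodEquivOfCoprime (h : (Nat.card G₁).Coprime (Nat.card G₂)) :
    Subgroup G₁ × Subgroup G₂ ≃ Subgroup (G₁ × G₂) where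
  toFun p := p.1.prod p.2
  invFun K := (K.map (MonoidHom.fst G₁ G₂), K.map (MonoidHom.snd G₁ G₂))
  left_inv p := by simp [map_fst_prod, map_snd_prod]
  right_inv := eq_prod_map_fst_map_snd_of_coprime h

theorem prodEquivOfCoprime_apply (h : (Nat.card G₁).Coprime (Nat.card G₂))
    (p : Subgroup G₁ × Subgroup G₂) :
    prodEquivOfCoprime h p = p.1.prod p.2 := rfl

theorem card_isCyclic_le_prod (h : (Nat.card G₁).Coprime (Nat.card G₂))
    (H₁ : Subgroup G₁) (H₂ : Subgroup G₂) :
    Nat.card {K : Subgroup (G₁ × G₂) // K ≤ H₁.prod H₂ ∧ IsCyclic K} =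
      Nat.card {K : Subgroup G₁ // K ≤ H₁ ∧ IsCyclic K} *
        Nat.card {K : Subgroup G₂ // K ≤ H₂ ∧ IsCyclic K} :=
  Nat.card_subtype_eq_mul_of_equiv (prodEquivOfCoprime h) fun A B => by
    rw [prodEquivOfCoprime_apply, prod_le_prod_iff, isCyclic_prod_iff_of_coprime h]
    tauto

theorem card_isCyclic (h : (Nat.card G₁).Coprime (Nat.card G₂)) :
    Nat.card {K : Subgroup (G₁ × G₂) // IsCyclic K} =
      Nat.card {K : Subgroup G₁ // IsCyclic K} * Nat.card {K : Subgroup G₂ // IsCyclic K} :=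
  Nat.card_subtype_eq_mul_of_equiv (prodEquivOfCoprime h) fun _ _ =>
    isCyclic_prod_iff_of_coprime h

theorem card_permuting_isCyclic_pairs (h : (Nat.card G₁).Coprime (Nat.card G₂))
    (H₁ : Subgroup G₁) (H₂ : Subgroup G₂) :
    Nat.card {p : Subgroup (G₁ × G₂) × Subgroup (G₁ × G₂) //
        p.1 ≤ H₁.prod H₂ ∧ IsCyclic p.1 ∧ IsCyclic p.2 ∧ p.1.Permutes p.2} =
      Nat.card {p : Subgroup G₁ × Subgroup G₁ //
          p.1 ≤ H₁ ∧ IsCyclic p.1 ∧ IsCyclic p.2 ∧ p.1.Permutes p.2} *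
        Nat.card {p : Subgroup G₂ × Subgroup G₂ //
          p.1 ≤ H₂ ∧ IsCyclic p.1 ∧ IsCyclic p.2 ∧ p.1.Permutes p.2} :=
  Nat.card_subtype_eq_mul_of_equiv
    ((Equiv.prodProdProdComm _ _ _ _).trans
      ((prodEquivOfCoprime h).prodCongr (prodEquivOfCoprime h)))
    fun ⟨A, B⟩ ⟨C, D⟩ => by
      change A.prod C ≤ H₁.prod H₂ ∧ IsCyclic (A.prod C) ∧ IsCyclic (B.prod D) ∧
        (A.prod C).Permutes (B.prod D) ↔ _
      rw [prod_le_prod_iff, isCyclic_prod_iff_of_coprime h, isCyclic_prod_iff_of_coprime h,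
        prod_permutes_prod_iff]
      tauto

end Subgroup

theorem csd_prod_general {G₁ G₂ : Type*} [Group G₁] [Group G₂]
    (h : Nat.Coprime (Nat.card G₁) (Nat.card G₂))
    (H₁ : Subgroup G₁) (H₂ : Subgroup G₂) :
    csd (H₁.prod H₂) = csd H₁ * csd H₂ := by
  rw [csd, csd, csd, Subgroup.card_permuting_isCyclic_pairs h,
    Subgroup.card_isCyclic_le_prod h, Subgroup.card_isCyclic h]
  push_cast
  rw [div_mul_div_comm, mul_mul_mul_comm]

/-- For a direct product of finite groups of coprime orders,
. -/
theorem csd_prod {G₁ G₂ : Type*} [Group G₁] [Group G₂] [Finite G₁] [Finite G₂]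
    (h : Nat.Coprime (Nat.card G₁) (Nat.card G₂))
    (H₁ : Subgroup G₁) (H₂ : Subgroup G₂) :
    csd (H₁.prod H₂) = csd H₁ * csd H₂ :=
  csd_prod_general h H₁ H₂
end

section
/- For a finite group G, conjugate subgroups have equal relative cyclic subgroup commutativity degree: csd(Hᵍ, G) = csd(H, G) for every H ≤ G and g ∈ G. -/
open scoped Pointwise

/-!
An automorphism `a` of `G` acts on `Subgroup G` by a bijection preserving inclusion, cyclicity and
permutability, so it maps each of the three sets counted by `csd H` bijectively onto the
corresponding set for `csd (a • H)`. Conjugation by `g` is such an automorphism.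
-/

namespace Subgroup

variable {G : Type*} [Group G]

theorem isCyclic_smul_iff (a : MulAut G) (K : Subgroup G) :
    IsCyclic (a • K : Subgroup G) ↔ IsCyclic K :=
  (K.equivSMul a).isCyclic.symm

theorem permutes_smul_iff (a : MulAut G) (A B : Subgroup G) :
    (a • A).Permutes (a • B) ↔ A.Permutes B := by
  unfold Permutes
  rw [coe_pointwise_smul, coe_pointwise_smul, ← smul_mul', ← smul_mul']
  exact smul_left_cancel_iff a

end Subgroup

open Subgroup in
theorem csd_smul {G : Type*} [Group G] (a : MulAut G) (H : Subgroup G) :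
    csd (a • H) = csd H := by
  have pairs : {p : Subgroup G × Subgroup G //
        p.1 ≤ H ∧ IsCyclic p.1 ∧ IsCyclic p.2 ∧ p.1.Permutes p.2} ≃
      {p : Subgroup G × Subgroup G //
        p.1 ≤ a • H ∧ IsCyclic p.1 ∧ IsCyclic p.2 ∧ p.1.Permutes p.2} :=
    Equiv.subtypeEquiv ((MulAction.toPerm a).prodCongr (MulAction.toPerm a)) fun p =>
      pointwise_smul_le_pointwise_smul_iff.symm.and <| (isCyclic_smul_iff a _).symm.and <|
        (isCyclic_smul_iff a _).symm.and (permutes_smul_iff a _ _).symm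
  have subgroups : {K : Subgroup G // K ≤ H ∧ IsCyclic K} ≃
      {K : Subgroup G // K ≤ a • H ∧ IsCyclic K} :=
    Equiv.subtypeEquiv (MulAction.toPerm a) fun K =>
      pointwise_smul_le_pointwise_smul_iff.symm.and (isCyclic_smul_iff a K).symm
  unfold csd
  rw [Nat.card_congr pairs, Nat.card_congr subgroups]

theorem csd_conj_general {G : Type*} [Group G] (H : Subgroup G) (g : G) :
    csd (MulAut.conj g • H) = csd H :=
  csd_smul _ H

/-- Conjugate subgroups have equal relative cyclic subgroup commutativity degree. -/
theorem csd_conj {G : Type*} [Group G] [Finite G] (H : Subgroup G) (g : G) :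
    csd (MulAut.conj g • H) = csd H :=
  csd_conj_general H g
end

section
/- Let G be a finite group such that csd(G) < 1/2 + |N(G) ∩ L₁(G)| / (2|L₁(G)|). Then G has more than two relative cyclic subgroup commutativity degrees, i.e., |{csd(H,G) : H ≤ G}| > 2. -/
open scoped Pointwise

/-!
Let `n = |L₁(G)|` and let `p(A)` count the cyclic subgroups permuting with `A`. Grouping the
pairs by their first component gives
`csd(H) = 1 - ∑_{K ∈ L₁(H)} (n - p(K)) / (|L₁(H)| n)`.
Hence `csd(1) = 1`, while the hypothesis forces `csd(G) < 1`, so some cyclic `K` has `p(K) < n`.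
For `H` minimal among these the sum is the single term `n - p(H) ≤ n - |N(G) ∩ L₁(G)|` (normal
subgroups permute with everything), and `|L₁(H)| ≥ 2`; so
`1/2 + |N(G) ∩ L₁(G)| / (2n) ≤ csd(H) < 1`, and `csd(G) < csd(H) < csd(1)` are three distinct
values.
-/

namespace Subgroup

variable {G : Type*} [Group G]

theorem bot_permutes (A : Subgroup G) : (⊥ : Subgroup G).Permutes A := by
  simp only [Permutes, coe_bot, Set.singleton_one, one_mul, mul_one]

theorem permutes_of_normal (A : Subgroup G) {N : Subgroup G} [N.Normal] : A.Permutes N := by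
  rw [Permutes, ← mul_normal A N, ← normal_mul N A, sup_comm]

end Subgroup

section PermutingCyclicCount

variable {G : Type*} [Group G]

noncomputable def permutingCyclicCount (A : Subgroup G) : ℕ :=
  Nat.card {B : Subgroup G // IsCyclic B ∧ A.Permutes B}

theorem permutingCyclicCount_bot :
    permutingCyclicCount (⊥ : Subgroup G) = Nat.card {K : Subgroup G // IsCyclic K} :=
  Nat.card_congr (Equiv.subtypeEquivRight fun B => and_iff_left (Subgroup.bot_permutes B))

variable [Finite G]

theorem permutingCyclicCount_le (A : Subgroup G) :
    permutingCyclicCount A ≤ Nat.card {K : Subgroup G // IsCyclic K} :=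
  Nat.card_le_card_of_injective _ (Subtype.impEmbedding _ _ fun _ hB => hB.1).injective

theorem card_normal_cyclic_le_permutingCyclicCount (A : Subgroup G) :
    Nat.card {K : Subgroup G // K.Normal ∧ IsCyclic K} ≤ permutingCyclicCount A :=
  Nat.card_le_card_of_injective _
    (Subtype.impEmbedding _ _ fun _ ⟨hN, hcyc⟩ =>
      ⟨hcyc, have := hN; A.permutes_of_normal⟩).injective

theorem card_normal_cyclic_le_card_cyclic :
    Nat.card {K : Subgroup G // K.Normal ∧ IsCyclic K} ≤
      Nat.card {K : Subgroup G // IsCyclic K} :=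
  (card_normal_cyclic_le_permutingCyclicCount ⊥).trans (permutingCyclicCount_le ⊥)

theorem card_permuting_cyclic_pairs (H : Subgroup G) :
    Nat.card {p : Subgroup G × Subgroup G //
        p.1 ≤ H ∧ IsCyclic p.1 ∧ IsCyclic p.2 ∧ p.1.Permutes p.2} =
      ∑ᶠ K : {K : Subgroup G // K ≤ H ∧ IsCyclic K},
        permutingCyclicCount (K : Subgroup G) := by
  have := Fintype.ofFinite {K : Subgroup G // K ≤ H ∧ IsCyclic K}
  simp only [finsum_eq_sum_of_fintype, permutingCyclicCount, ← Nat.card_sigma]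
  exact Nat.card_congr
    { toFun := fun p => ⟨⟨p.1.1, p.2.1, p.2.2.1⟩, ⟨p.1.2, p.2.2.2⟩⟩
      invFun := fun s => ⟨(s.1.1, s.2.1), s.1.2.1, s.1.2.2, s.2.2⟩
      left_inv := fun _ => rfl
      right_inv := fun _ => rfl }

theorem card_cyclic_pos : 0 < Nat.card {K : Subgroup G // IsCyclic K} :=
  have : Nonempty {K : Subgroup G // IsCyclic K} := ⟨⟨⊥, inferInstance⟩⟩
  Nat.card_pos

theorem card_cyclic_le_pos (H : Subgroup G) :
    0 < Nat.card {K : Subgroup G // K ≤ H ∧ IsCyclic K} :=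
  have : Nonempty {K : Subgroup G // K ≤ H ∧ IsCyclic K} :=
    ⟨⟨⊥, bot_le, inferInstance⟩⟩
  Nat.card_pos

theorem csd_eq_one_sub (H : Subgroup G) :
    csd H = 1 - (∑ᶠ K : {K : Subgroup G // K ≤ H ∧ IsCyclic K},
        ((Nat.card {K : Subgroup G // IsCyclic K} : ℝ) -
          permutingCyclicCount (K : Subgroup G))) /
      ((Nat.card {K : Subgroup G // K ≤ H ∧ IsCyclic K} : ℝ) *
        Nat.card {K : Subgroup G // IsCyclic K}) := by
  have := Fintype.ofFinite {K : Subgroup G // K ≤ H ∧ IsCyclic K}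
  have ht : (0 : ℝ) < Nat.card {K : Subgroup G // K ≤ H ∧ IsCyclic K} := by
    exact_mod_cast card_cyclic_le_pos H
  have hn : (0 : ℝ) < Nat.card {K : Subgroup G // IsCyclic K} := by
    exact_mod_cast card_cyclic_pos
  rw [csd, card_permuting_cyclic_pairs, finsum_eq_sum_of_fintype, finsum_eq_sum_of_fintype,
    Finset.sum_sub_distrib, Finset.sum_const, Finset.card_univ, ← Nat.card_eq_fintype_card]
  push_cast
  field_simp
  ring

theorem csd_eq_one_of_forall_permutingCyclicCount_eq (H : Subgroup G)
    (h : ∀ K ≤ H, IsCyclic K →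
      permutingCyclicCount K = Nat.card {K : Subgroup G // IsCyclic K}) :
    csd H = 1 := by
  rw [csd_eq_one_sub,
    finsum_eq_zero_of_forall_eq_zero fun K => by rw [h K.1 K.2.1 K.2.2, sub_self],
    zero_div, sub_zero]

theorem csd_bot : csd (⊥ : Subgroup G) = 1 :=
  csd_eq_one_of_forall_permutingCyclicCount_eq ⊥ fun K hK _ => by
    rw [le_bot_iff.mp hK, permutingCyclicCount_bot]

theorem csd_mem_Ico_of_minimal {H : Subgroup G}
    (hH : Minimal (fun K : Subgroup G => IsCyclic K ∧
      permutingCyclicCount K < Nat.card {K : Subgroup G // IsCyclic K}) H) :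
    csd H ∈ Set.Ico (1 / 2 + (Nat.card {K : Subgroup G // K.Normal ∧ IsCyclic K} : ℝ) /
      (2 * (Nat.card {K : Subgroup G // IsCyclic K} : ℝ))) 1 := by
  set n := Nat.card {K : Subgroup G // IsCyclic K}
  set m := Nat.card {K : Subgroup G // K.Normal ∧ IsCyclic K}
  set t := Nat.card {K : Subgroup G // K ≤ H ∧ IsCyclic K}
  obtain ⟨⟨hcyc, hlt⟩, hmin⟩ := hH
  have hsum : ∑ᶠ K : {K : Subgroup G // K ≤ H ∧ IsCyclic K},
      ((n : ℝ) - permutingCyclicCount (K : Subgroup G)) = n - permutingCyclicCount H := by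
    rw [finsum_eq_single _ ⟨H, le_rfl, hcyc⟩]
    intro K hK
    have hKn : ¬ permutingCyclicCount K.1 < n := fun hKn =>
      hK (Subtype.ext (le_antisymm K.2.1 (hmin ⟨K.2.2, hKn⟩ K.2.1)))
    rw [(permutingCyclicCount_le K.1).antisymm (not_lt.mp hKn), sub_self]
  have ht : (2 : ℝ) ≤ t := by
    have hHbot : H ≠ ⊥ := by rintro rfl; exact hlt.ne permutingCyclicCount_bot
    have : 1 < t := Finite.one_lt_card_iff_nontrivial.mpr
      ⟨⟨H, le_rfl, hcyc⟩, ⟨⊥, bot_le, inferInstance⟩,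
        fun h => hHbot (congrArg Subtype.val h)⟩
    exact_mod_cast this
  have hn : (0 : ℝ) < n := by exact_mod_cast card_cyclic_pos
  have hmH : (m : ℝ) ≤ permutingCyclicCount H := by
    exact_mod_cast card_normal_cyclic_le_permutingCyclicCount H
  have hHn : (0 : ℝ) < n - permutingCyclicCount H := sub_pos.mpr (by exact_mod_cast hlt)
  rw [csd_eq_one_sub, hsum]
  constructor
  · calc 1 / 2 + (m : ℝ) / (2 * n) = 1 - (n - m) / (2 * n) := by field_simp; ring
      _ ≤ 1 - (n - permutingCyclicCount H) / (2 * n) := by gcongr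
      _ ≤ 1 - (n - permutingCyclicCount H) / (t * n) := by gcongr
  · exact sub_lt_self _ (by positivity)

end PermutingCyclicCount

/-- If , then  has more than two
relative cyclic subgroup commutativity degrees. -/
theorem more_than_two_relative_csd {G : Type*} [Group G] [Finite G]
    (h : csd (⊤ : Subgroup G) <
      1 / 2 + (Nat.card {K : Subgroup G // K.Normal ∧ IsCyclic K} : ℝ) /
        (2 * (Nat.card {K : Subgroup G // IsCyclic K} : ℝ))) :
    2 < (Set.range fun H : Subgroup G => csd H).ncard := by
  set n := Nat.card {K : Subgroup G // IsCyclic K}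
  have htop : csd (⊤ : Subgroup G) < 1 := h.trans_le <| by
    have hn : (0 : ℝ) < n := by exact_mod_cast card_cyclic_pos
    have hm : (Nat.card {K : Subgroup G // K.Normal ∧ IsCyclic K} : ℝ) ≤ n := by
      exact_mod_cast card_normal_cyclic_le_card_cyclic
    rw [← sub_nonneg]
    field_simp
    linarith
  obtain ⟨K, hK⟩ : ∃ K : Subgroup G, IsCyclic K ∧ permutingCyclicCount K < n := by
    by_contra! hall
    exact htop.ne <| csd_eq_one_of_forall_permutingCyclicCount_eq ⊤ fun K _ hK =>
      (permutingCyclicCount_le K).antisymm (hall K hK)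
  obtain ⟨H, hH⟩ := exists_minimal_of_wellFoundedLT
    (fun K : Subgroup G => IsCyclic K ∧ permutingCyclicCount K < n) ⟨K, hK⟩
  obtain ⟨hHlow, hHlt⟩ := csd_mem_Ico_of_minimal hH
  exact (Set.two_lt_ncard_iff (Set.finite_range _)).mpr ⟨csd ⊤, csd H, 1, ⟨⊤, rfl⟩,
    ⟨H, rfl⟩, ⟨⊥, csd_bot⟩, (h.trans_le hHlow).ne, htop.ne, hHlt.ne⟩
end

section
/- Fix an integer n ≥ 4. The function g : [2,∞) → ℝ defined by g(x) = (x(n + 2^{n-2}) + 2^{x-2}(n+2)) / (x + 2^{x-2}) is strictly decreasing on [2,∞). -/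
/-!
Writing `p(x) = 2^(x-2)`, `A = n + 2^(n-2)` and `B = n + 2`, the value `g(x)` is the weighted mean
of `A` and `B` with weights `x` and `p(x)`, that is `g(x) = B + (A - B) / (1 + p(x) / x)`. For `n ≥ 4`
we have `A > B`, so `g` decreases exactly where `p(x) / x` increases; and `log (2^x / x) = x log 2 - log x`
has derivative `log 2 - 1/x > 0` once `x > 1 / log 2 ≈ 1.44`.
-/

open Real Set

section RpowDivSelf

variable {b : ℝ}

lemma mul_log_sub_log_strictMonoOn (hb : 1 < b) :
    StrictMonoOn (fun x => x * log b - log x) (Ici (log b)⁻¹) := by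
  have hlog : 0 < log b := log_pos hb
  have hpos : ∀ x ∈ Ici (log b)⁻¹, 0 < x := fun x hx => (inv_pos.mpr hlog).trans_le hx
  apply strictMonoOn_of_deriv_pos (convex_Ici _)
  · exact (continuousOn_id.mul continuousOn_const).sub
      (continuousOn_log.mono fun x hx => (hpos x hx).ne')
  · intro x hx
    rw [interior_Ici] at hx
    have hx0 : 0 < x := (inv_pos.mpr hlog).trans hx
    have hderiv : HasDerivAt (fun x => x * log b - log x) (1 * log b - x⁻¹) x :=
      ((hasDerivAt_id x).mul_const (log b)).sub (hasDerivAt_log hx0.ne')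
    rw [hderiv.deriv]
    simpa using inv_lt_of_inv_lt₀ hlog hx

lemma rpow_div_self_strictMonoOn (hb : 1 < b) :
    StrictMonoOn (fun x => b ^ x / x) (Ici (log b)⁻¹) := by
  have hexp : ∀ x ∈ Ici (log b)⁻¹, b ^ x / x = exp (x * log b - log x) := fun x hx => by
    have hx0 : 0 < x := (inv_pos.mpr (log_pos hb)).trans_le hx
    rw [rpow_def_of_pos (zero_lt_one.trans hb), exp_sub, exp_log hx0, mul_comm]
  intro x hx y hy hxy
  simp only [hexp x hx, hexp y hy]
  exact exp_lt_exp.mpr (mul_log_sub_log_strictMonoOn hb hx hy hxy)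

end RpowDivSelf

lemma two_rpow_sub_two_div_self_strictMonoOn :
    StrictMonoOn (fun x : ℝ => 2 ^ (x - 2) / x) (Ici 2) := by
  have hlog : (log 2)⁻¹ ≤ 2 :=
    inv_le_of_inv_le₀ (by norm_num) (by linarith [log_two_gt_d9])
  intro x hx y hy hxy
  simp only [rpow_sub two_pos, div_right_comm _ ((2 : ℝ) ^ (2 : ℝ))]
  exact div_lt_div_of_pos_right
    (rpow_div_self_strictMonoOn one_lt_two (Ici_subset_Ici.mpr hlog hx)
      (Ici_subset_Ici.mpr hlog hy) hxy) (by positivity)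

lemma weightedMean_lt_of_div_lt {A B x y p q : ℝ} (hBA : B < A) (hx : 0 < x) (hy : 0 < y)
    (hp : 0 < p) (hq : 0 < q) (h : p / x < q / y) :
    (y * A + q * B) / (y + q) < (x * A + p * B) / (x + p) := by
  rw [div_lt_div_iff₀ hx hy] at h
  rw [div_lt_div_iff₀ (by positivity) (by positivity)]
  nlinarith [mul_lt_mul_of_pos_left h (sub_pos.mpr hBA)]

/-- For fixed integer `n ≥ 4`, the function
`g(x) = (x(n + 2^(n-2)) + 2^(x-2)(n+2)) / (x + 2^(x-2))`
is strictly decreasing on `[2,∞)`, where `2^(x-2)` is the real power. -/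
theorem g_strictAntiOn (n : ℕ) (hn : 4 ≤ n) :
    StrictAntiOn (fun x : ℝ =>
        (x * ((n : ℝ) + 2 ^ (n - 2)) + (2 : ℝ) ^ (x - 2) * ((n : ℝ) + 2)) /
          (x + (2 : ℝ) ^ (x - 2)))
      (Set.Ici (2 : ℝ)) := by
  have hBA : (n : ℝ) + 2 < n + 2 ^ (n - 2) := by
    have : (2 : ℝ) ^ 2 ≤ 2 ^ (n - 2) := pow_le_pow_right₀ one_le_two (by omega)
    linarith
  intro x hx y hy hxy
  have hx0 : (0 : ℝ) < x := two_pos.trans_le hx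
  have hy0 : (0 : ℝ) < y := two_pos.trans_le hy
  exact weightedMean_lt_of_div_lt hBA hx0 hy0 (by positivity) (by positivity)
    (two_rpow_sub_two_div_self_strictMonoOn hx hy hxy)
end

section
/- Fix an integer n ≥ 4. The values rᵢ = (i(n + 2^{n-2}) + 2^{i-2}(n+2)) / ((i + 2^{i-2})(n + 2^{n-2})) for i = 2, 3, …, n are pairwise distinct, and rₙ ≠ 1. In particular, r₂ > r₃ > … > rₙ > 1 does not collapse: there are exactly n-1 distinct values among r₂,…,rₙ, none equal to 1. -/
/-!
Writing `A = n + 2^(n-2)` and `w i = 2^(i-2) / (i + 2^(i-2))`, one has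
`rᵢ = 1 - (1 - (n+2)/A) · w i`. For `n ≥ 4` the factor `1 - (n+2)/A` is positive, and `w` is
strictly increasing on `i ≥ 2` because `i / 2^(i-2)` strictly decreases there
(`(i+1)/2^(i-1) < i/2^(i-2)` amounts to `i + 1 < 2i`). Hence `r` is strictly decreasing, below `1`.
-/

theorem strictMonoOn_two_pow_sub_two_div :
    StrictMonoOn (fun i : ℕ => (2 : ℝ) ^ (i - 2) / (i + 2 ^ (i - 2))) (Set.Ici 2) := by
  refine strictMonoOn_of_lt_succ Set.ordConnected_Ici fun i _ hi _ => ?_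
  simp only [Set.mem_Ici, Order.succ_eq_add_one] at hi ⊢
  have hpow : (2 : ℝ) ^ (i + 1 - 2) = 2 * 2 ^ (i - 2) := by
    rw [show i + 1 - 2 = i - 2 + 1 by omega, pow_succ']
  have hi_real : (2 : ℝ) ≤ i := by exact_mod_cast hi
  rw [hpow, div_lt_div_iff₀ (by positivity) (by positivity)]
  push_cast
  nlinarith [pow_pos (two_pos : (0 : ℝ) < 2) (i - 2)]

theorem div_mul_add_mul_eq_one_sub {a b A B : ℝ} (hab : a + b ≠ 0) (hA : A ≠ 0) :
    (a * A + b * B) / ((a + b) * A) = 1 - (1 - B / A) * (b / (a + b)) := by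
  field_simp
  ring

/-- For fixed `n ≥ 4`, the values
`rᵢ = (i(n + 2^(n-2)) + 2^(i-2)(n+2)) / ((i + 2^(i-2))(n + 2^(n-2)))`,
`i = 2, …, n`, are pairwise distinct, `rₙ ≠ 1`, and there are exactly
`n - 1` distinct values among them. -/
theorem quaternion_relative_csd_distinct (n : ℕ) (hn : 4 ≤ n) :
    let r : ℕ → ℝ := fun i =>
      ((i : ℝ) * ((n : ℝ) + 2 ^ (n - 2)) + 2 ^ (i - 2) * ((n : ℝ) + 2)) /
        (((i : ℝ) + 2 ^ (i - 2)) * ((n : ℝ) + 2 ^ (n - 2)))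
    (∀ i j, 2 ≤ i → i ≤ n → 2 ≤ j → j ≤ n → i ≠ j → r i ≠ r j) ∧
      r n ≠ 1 ∧ {x : ℝ | ∃ i, 2 ≤ i ∧ i ≤ n ∧ r i = x}.ncard = n - 1 := by
  intro r
  set w : ℕ → ℝ := fun i => 2 ^ (i - 2) / (i + 2 ^ (i - 2))
  set c : ℝ := 1 - (n + 2) / (n + 2 ^ (n - 2))
  have hr : ∀ i, r i = 1 - c * w i := fun i =>
    div_mul_add_mul_eq_one_sub (by positivity) (by positivity)
  have hc : 0 < c := by
    have : (2 : ℝ) ^ 1 < 2 ^ (n - 2) := pow_lt_pow_right₀ one_lt_two (by omega)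
    exact sub_pos.2 ((div_lt_one (by positivity)).2 (by linarith))
  have hanti : StrictAntiOn r (Set.Icc 2 n) := fun i hi j hj hij => by
    simp only [hr]
    linarith [mul_lt_mul_of_pos_left (strictMonoOn_two_pow_sub_two_div hi.1 hj.1 hij) hc]
  refine ⟨fun i j hi hin hj hjn => hanti.injOn.ne ⟨hi, hin⟩ ⟨hj, hjn⟩, ?_, ?_⟩
  · have hw : 0 < w n := by positivity
    exact hr n ▸ (sub_lt_self 1 (mul_pos hc hw)).ne
  · have hset : {x : ℝ | ∃ i, 2 ≤ i ∧ i ≤ n ∧ r i = x} = r '' Set.Icc 2 n := by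
      ext x
      simp [and_assoc]
    rw [hset, hanti.injOn.ncard_image, Set.ncard_Icc_nat]
    omega
end

section
/- The function h : [4,∞) → ℝ defined by h(x) = (x² + (x+1)·2^{x-1}) / (x + 2^{x-1})² is strictly decreasing on [4,∞). -/
/-!
Writing `t = 2^(x-1)` and `s = x + t`, one has `h(x) = 1 - (t / s) * (1 - 1 / s)`.
Both factors are nonnegative and strictly increasing on `[4, ∞)`: the second because `s` is,
the first because `t / s = 1 / (1 + x / t)` and `x / 2^(x-1)` decreases once `x ≥ 1 / log 2`,
which follows from `exp u > 1 + u`.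
-/

open Real Set

lemma strictAntiOn_div_rpow {a : ℝ} (ha : 1 < a) :
    StrictAntiOn (fun x : ℝ => x / a ^ x) (Ici (log a)⁻¹) := by
  intro x (hx : (log a)⁻¹ ≤ x) y _ hxy
  have hlog : 0 < log a := log_pos ha
  have hx0 : 0 < x := lt_of_lt_of_le (inv_pos.2 hlog) hx
  have hxlog : 1 ≤ x * log a := by rwa [inv_le_iff_one_le_mul₀' hlog, mul_comm] at hx
  have hgrowth : y < x * a ^ (y - x) := by
    have hexp : (y - x) * log a + 1 < a ^ (y - x) := by
      rw [rpow_def_of_pos (by linarith), mul_comm (log a)]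
      exact add_one_lt_exp (mul_pos (sub_pos.2 hxy) hlog).ne'
    nlinarith [mul_le_mul_of_nonneg_left hxlog (sub_pos.2 hxy).le]
  have hax : 0 < a ^ x := rpow_pos_of_pos (by linarith) x
  have hsplit : a ^ y = a ^ x * a ^ (y - x) := by rw [← rpow_add (by linarith), add_sub_cancel]
  rw [div_lt_div_iff₀ (rpow_pos_of_pos (by linarith) y) hax, hsplit]
  nlinarith [mul_lt_mul_of_pos_right hgrowth hax]

lemma inv_log_two_le_four : (log 2)⁻¹ ≤ 4 := by
  have := log_two_gt_d9
  rw [inv_le_comm₀ (by linarith) (by norm_num)]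
  linarith

lemma strictAntiOn_div_two_rpow_sub_one :
    StrictAntiOn (fun x : ℝ => x / 2 ^ (x - 1)) (Ici 4) := by
  intro x hx y hy hxy
  have h := (strictAntiOn_div_rpow one_lt_two).mono (Ici_subset_Ici.2 inv_log_two_le_four) hx hy hxy
  simp only [rpow_sub_one two_ne_zero, div_div_eq_mul_div, mul_div_right_comm _ (2 : ℝ)]
  exact mul_lt_mul_of_pos_right h two_pos

lemma strictMonoOn_two_rpow_sub_one_div :
    StrictMonoOn (fun x : ℝ => 2 ^ (x - 1) / (x + 2 ^ (x - 1))) (Ici 4) := by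
  intro x (hx : 4 ≤ x) y (hy : 4 ≤ y) hxy
  have h := strictAntiOn_div_two_rpow_sub_one hx hy hxy
  have htx : (0 : ℝ) < 2 ^ (x - 1) := rpow_pos_of_pos two_pos _
  have hty : (0 : ℝ) < 2 ^ (y - 1) := rpow_pos_of_pos two_pos _
  beta_reduce at h ⊢
  rw [div_lt_div_iff₀ hty htx] at h
  rw [div_lt_div_iff₀ (by linarith) (by linarith)]
  linear_combination h

lemma strictMono_add_two_rpow_sub_one : StrictMono (fun x : ℝ => x + 2 ^ (x - 1)) :=
  fun _ _ hxy => add_lt_add hxy (rpow_lt_rpow_of_exponent_lt one_lt_two (by linarith))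

lemma strictMonoOn_one_sub_one_div_add_two_rpow_sub_one :
    StrictMonoOn (fun x : ℝ => 1 - 1 / (x + 2 ^ (x - 1))) (Ici 0) := by
  intro x (hx : 0 ≤ x) y _ hxy
  have hpos : 0 < x + 2 ^ (x - 1) := add_pos_of_nonneg_of_pos hx (rpow_pos_of_pos two_pos _)
  simpa using one_div_lt_one_div_of_lt hpos (strictMono_add_two_rpow_sub_one hxy)

lemma sq_add_mul_div_sq_eq {z t : ℝ} (h : z + t ≠ 0) :
    (z ^ 2 + (z + 1) * t) / (z + t) ^ 2 = 1 - t / (z + t) * (1 - 1 / (z + t)) := by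
  field_simp
  ring

/-- The function `h(x) = (x² + (x+1)·2^(x-1)) / (x + 2^(x-1))²`
is strictly decreasing on `[4,∞)`, where `2^(x-1)` is the real power. -/
theorem h_strictAntiOn :
    StrictAntiOn (fun x : ℝ =>
        (x ^ 2 + (x + 1) * (2 : ℝ) ^ (x - 1)) / (x + (2 : ℝ) ^ (x - 1)) ^ 2)
      (Set.Ici (4 : ℝ)) := by
  intro x (hx : 4 ≤ x) y (hy : 4 ≤ y) hxy
  have one_le : ∀ z : ℝ, 4 ≤ z → 1 ≤ z + 2 ^ (z - 1) := fun z hz => by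
    linarith [rpow_pos_of_pos two_pos (z - 1)]
  have hsx := one_le x hx
  have hsy := one_le y hy
  have hu := strictMonoOn_two_rpow_sub_one_div hx hy hxy
  have hv := strictMonoOn_one_sub_one_div_add_two_rpow_sub_one
    (show (0 : ℝ) ≤ x by linarith) (show (0 : ℝ) ≤ y by linarith) hxy
  have hu0 : (0 : ℝ) ≤ 2 ^ (x - 1) / (x + 2 ^ (x - 1)) :=
    div_nonneg (rpow_pos_of_pos two_pos _).le (by linarith)
  have hv0 : (0 : ℝ) ≤ 1 - 1 / (x + 2 ^ (x - 1)) :=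
    sub_nonneg.2 (div_le_one_of_le₀ hsx (by linarith))
  beta_reduce at hu hv ⊢
  rw [sq_add_mul_div_sq_eq (by linarith), sq_add_mul_div_sq_eq (by linarith)]
  linarith [mul_lt_mul'' hu hv hu0 hv0]
end

section
/- For integers i ≠ j with 4 ≤ i, j, the values (i² + (i+1)·2^{i-1})/(i + 2^{i-1})² and (j² + (j+1)·2^{j-1})/(j + 2^{j-1})² are distinct. -/
/-! Writing `a = n` and `m = 2^(n-1)`, passing from `n` to `n + 1` replaces `(a, m)` by
`(a + 1, 2m)`, and after clearing denominators the decrease of the value is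
`m ((a³ - a² + a + 1) + (3a² - 2a + 3) m + 2a m²) > 0`. The step from `0` to `1`, where
truncated subtraction breaks the doubling, is checked directly (`1 > 3/4`). So the sequence is
strictly decreasing on all of `ℕ`, hence injective. -/

noncomputable def quaternionCsd (n : ℕ) : ℝ :=
  ((n : ℝ) ^ 2 + ((n : ℝ) + 1) * 2 ^ (n - 1)) / ((n : ℝ) + 2 ^ (n - 1)) ^ 2

lemma quaternionCsd_doubling_lt {a m : ℝ} (ha : 0 ≤ a) (hm : 0 < m) :
    ((a + 1) ^ 2 + (a + 2) * (2 * m)) / (a + 1 + 2 * m) ^ 2 <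
      (a ^ 2 + (a + 1) * m) / (a + m) ^ 2 := by
  rw [div_lt_div_iff₀ (by positivity) (by positivity)]
  have hcubic : 0 < a ^ 3 - a ^ 2 + a + 1 := by nlinarith [mul_nonneg ha (sq_nonneg (a - 1 / 2))]
  have hquad : 0 < 3 * a ^ 2 - 2 * a + 3 := by nlinarith [sq_nonneg (a - 1 / 3)]
  have hdiff : 0 < m * ((a ^ 3 - a ^ 2 + a + 1) + (3 * a ^ 2 - 2 * a + 3) * m + 2 * a * m ^ 2) :=
    mul_pos hm (by positivity)
  linear_combination hdiff

lemma quaternionCsd_succ_lt (n : ℕ) : quaternionCsd (n + 1) < quaternionCsd n := by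
  rcases n with _ | k
  · norm_num [quaternionCsd]
  · have h := quaternionCsd_doubling_lt (a := (k : ℝ) + 1) (m := 2 ^ k)
      (by positivity) (by positivity)
    simp only [quaternionCsd, Nat.add_sub_cancel, Nat.cast_add, Nat.cast_one]
    convert h using 3 <;> ring

lemma quaternionCsd_strictAnti : StrictAnti quaternionCsd :=
  strictAnti_nat_of_succ_lt quaternionCsd_succ_lt

theorem quaternion_csd_values_distinct_general (i j : ℕ)
    (hij : i ≠ j) :
    ((i : ℝ) ^ 2 + ((i : ℝ) + 1) * 2 ^ (i - 1)) / ((i : ℝ) + 2 ^ (i - 1)) ^ 2 ≠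
      ((j : ℝ) ^ 2 + ((j : ℝ) + 1) * 2 ^ (j - 1)) / ((j : ℝ) + 2 ^ (j - 1)) ^ 2 :=
  quaternionCsd_strictAnti.injective.ne hij

/-- For integers `i ≠ j` with `4 ≤ i, j`, the values
`(i² + (i+1)·2^(i-1))/(i + 2^(i-1))²` and `(j² + (j+1)·2^(j-1))/(j + 2^(j-1))²`
are distinct. -/
theorem quaternion_csd_values_distinct (i j : ℕ) (hi : 4 ≤ i) (hj : 4 ≤ j)
    (hij : i ≠ j) :
    ((i : ℝ) ^ 2 + ((i : ℝ) + 1) * 2 ^ (i - 1)) / ((i : ℝ) + 2 ^ (i - 1)) ^ 2 ≠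
      ((j : ℝ) ^ 2 + ((j : ℝ) + 1) * 2 ^ (j - 1)) / ((j : ℝ) + 2 ^ (j - 1)) ^ 2 :=
  quaternion_csd_values_distinct_general i j hij
end

section
/- For n ≥ 1 a positive integer and p, q primes with q | p − 1, the two quantities (n(2n+p) + 2n + 1)/((n+1)(2n+p)) and (2n(2n+p) + p(2n+1))/(2n+p)² are never equal. -/
/-!
Clearing denominators, the difference of the two quantities is `n (p - 1) (p - 2) / ((n + 1)(2n + p)²)`,
so they agree only for `p ∈ {1, 2}`. A prime `p` with a prime divisor of `p - 1` is at least `3`.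
-/

theorem Nat.Prime.three_le_of_prime_dvd_sub_one {p q : ℕ} (hp : p.Prime) (hq : q.Prime)
    (hdvd : q ∣ p - 1) : 3 ≤ p := by
  have hp2 : p ≠ 2 := by
    rintro rfl
    exact hq.ne_one (Nat.dvd_one.mp hdvd)
  have := hp.two_le
  omega

theorem relative_csd_eq_iff {n p : ℝ} (hn : n + 1 ≠ 0) (hs : 2 * n + p ≠ 0) :
    (n * (2 * n + p) + 2 * n + 1) / ((n + 1) * (2 * n + p)) =
        (2 * n * (2 * n + p) + p * (2 * n + 1)) / (2 * n + p) ^ 2 ↔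
      n * ((p - 1) * (p - 2)) = 0 := by
  rw [div_eq_div_iff (mul_ne_zero hn hs) (pow_ne_zero 2 hs)]
  constructor
  · intro h
    have : (2 * n + p) * (n * ((p - 1) * (p - 2))) = 0 := by linear_combination h
    exact (mul_eq_zero.mp this).resolve_left hs
  · intro h
    linear_combination (2 * n + p) * h

/-- For `n ≥ 1` and primes `p, q` with `q ∣ p − 1`, the quantities
`(n(2n+p) + 2n + 1)/((n+1)(2n+p))` and `(2n(2n+p) + p(2n+1))/(2n+p)²`
are never equal. -/
theorem relative_csd_values_distinct (n p q : ℕ) (hn : 1 ≤ n)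
    (hp : p.Prime) (hq : q.Prime) (hdvd : q ∣ p - 1) :
    ((n : ℝ) * (2 * n + p) + 2 * n + 1) / (((n : ℝ) + 1) * (2 * n + p)) ≠
      (2 * (n : ℝ) * (2 * n + p) + (p : ℝ) * (2 * n + 1)) / ((2 * n + p : ℝ)) ^ 2 := by
  have hp3 : (3 : ℝ) ≤ p := by exact_mod_cast hp.three_le_of_prime_dvd_sub_one hq hdvd
  have hn1 : (1 : ℝ) ≤ n := by exact_mod_cast hn
  rw [Ne, relative_csd_eq_iff (by positivity) (by positivity)]
  exact mul_ne_zero (by positivity) (mul_ne_zero (by linarith) (by linarith))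
end
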